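/- arXiv:0901.0185 — 3 statements merged into one kernel-verified Lean document; each statement's English description precedes it below -/
import Mathlib

section
/- Let $A$ be a self-adjoint nonnegative operator on a real Hilbert space $H$, let $m:[0,+\infty)\to(0,+\infty)$ be $C^1$ with $\mu_1:=\inf m>0$, and let $b:[0,+\infty)\to(0,+\infty)$ be continuous with $\int_0^{+\infty}b(s)\,ds<+\infty$. Let $(u_0,u_1)\in D(A)\times D(A^{1/2})$ with $|u_1|^2+|A^{1/2}u_0|^2>0$, and suppose for some $\varepsilon>0$ the equation $\varepsilon u''+b(t)u'+m(|A^{1/2}u|^2)Au=0$ with data $(u_0,u_1)$ has a global $C^2$ solution $u_\varepsilon$. Then $\liminf_{t\to+\infty}\left(|u_\varepsilon'(t)|^2+|A^{1/2}u_\varepsilon(t)|^2\right)>0$. -/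
open scoped RealInnerProductSpace
open Set Filter MeasureTheory

/-!
The Kirchhoff energy `E(t) = ε |u'|² + M(|A^{1/2} u|²)`, with `M σ = ∫₀^σ m`, satisfies
`E' = -2 b |u'|² ≥ -(2/ε) b E`. Hence `E` is nonincreasing, which bounds the orbit, and by
Gronwall `E(t) ≥ E(0) exp(-(2/ε) ∫₀^∞ b) > 0`. On the bounded orbit `m` is bounded above, so
`E` is comparable to `|u'|² + |A^{1/2} u|²`, which therefore stays away from `0`.
-/

theorem mul_sub_le_intervalIntegral_of_le {f : ℝ → ℝ} {a b c : ℝ}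
    (hf : IntervalIntegrable f volume a b) (hab : a ≤ b) (h : ∀ x ∈ Icc a b, c ≤ f x) :
    c * (b - a) ≤ ∫ x in a..b, f x := by
  simpa [mul_comm] using
    intervalIntegral.integral_mono_on hab intervalIntegrable_const hf h

theorem intervalIntegral_le_mul_sub_of_le {f : ℝ → ℝ} {a b c : ℝ}
    (hf : IntervalIntegrable f volume a b) (hab : a ≤ b) (h : ∀ x ∈ Icc a b, f x ≤ c) :
    ∫ x in a..b, f x ≤ c * (b - a) := by
  simpa [mul_comm] using
    intervalIntegral.integral_mono_on hab hf intervalIntegrable_const h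

theorem intervalIntegral_le_integral_Ici {f : ℝ → ℝ} {a t : ℝ}
    (hf_nonneg : ∀ x, a ≤ x → 0 ≤ f x) (hf : IntegrableOn f (Ici a)) (ht : a ≤ t) :
    ∫ x in a..t, f x ≤ ∫ x in Ici a, f x := by
  rw [intervalIntegral.integral_of_le ht]
  refine setIntegral_mono_set hf ?_ (Ioc_subset_Icc_self.trans Icc_subset_Ici_self).eventuallyLE
  exact (ae_restrict_iff' measurableSet_Ici).2 (ae_of_all _ hf_nonneg)

theorem hasDerivWithinAt_integral_Ici {f : ℝ → ℝ} {a t : ℝ} (hf : ContinuousOn f (Ici a))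
    (ht : a ≤ t) : HasDerivWithinAt (fun u => ∫ x in a..u, f x) (f t) (Ici a) t := by
  -- extend `f` continuously to the left of `a` and apply the FTC to the extension
  set g : ℝ → ℝ := fun x => f (max x a)
  have hg : Continuous g :=
    hf.comp_continuous (continuous_id.max continuous_const) fun x => le_max_right x a
  have hfg : ∀ x, a ≤ x → g x = f x := fun x hx => by simp only [g, max_eq_left hx]
  refine ((hg.integral_hasStrictDerivAt a t).hasDerivAt.hasDerivWithinAt.congr
    (fun u hu => ?_) ?_).congr_deriv (hfg t ht)
  · refine intervalIntegral.integral_congr fun x hx => (hfg x ?_).symm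
    rw [uIcc_of_le hu] at hx
    exact hx.1
  · exact intervalIntegral.integral_congr fun x hx => by
      rw [uIcc_of_le ht] at hx; exact (hfg x hx.1).symm

theorem monotoneOn_Ici_of_hasDerivWithinAt_nonneg {f f' : ℝ → ℝ} {a : ℝ}
    (hf : ∀ t, a ≤ t → HasDerivWithinAt f (f' t) (Ici a) t) (hf' : ∀ t, a < t → 0 ≤ f' t) :
    MonotoneOn f (Ici a) := by
  refine monotoneOn_of_hasDerivWithinAt_nonneg (f' := f') (convex_Ici a)
    (fun t ht => (hf t ht).continuousWithinAt) (fun t ht => ?_) (fun t ht => ?_)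
  · rw [interior_Ici] at ht ⊢
    exact (hf t (le_of_lt ht)).mono Ioi_subset_Ici_self
  · rw [interior_Ici] at ht
    exact hf' t ht

theorem monotoneOn_mul_exp_of_hasDerivWithinAt {f f' K k : ℝ → ℝ} {a : ℝ}
    (hf : ∀ t, a ≤ t → HasDerivWithinAt f (f' t) (Ici a) t)
    (hK : ∀ t, a ≤ t → HasDerivWithinAt K (k t) (Ici a) t)
    (hf' : ∀ t, a < t → -(k t * f t) ≤ f' t) :
    MonotoneOn (fun t => f t * Real.exp (K t)) (Ici a) := by
  refine monotoneOn_Ici_of_hasDerivWithinAt_nonneg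
    (fun t ht => (hf t ht).mul (hK t ht).exp) fun t ht => ?_
  have : 0 ≤ (f' t + k t * f t) * Real.exp (K t) :=
    mul_nonneg (by linarith [hf' t ht]) (Real.exp_pos _).le
  linarith

theorem le_mul_exp_integral_of_hasDerivWithinAt {f f' k : ℝ → ℝ} {a t : ℝ}
    (hf : ∀ t, a ≤ t → HasDerivWithinAt f (f' t) (Ici a) t) (hf_nonneg : ∀ t, a ≤ t → 0 ≤ f t)
    (hk_cont : ContinuousOn k (Ici a)) (hk_nonneg : ∀ t, a ≤ t → 0 ≤ k t)
    (hk_int : IntegrableOn k (Ici a)) (hf' : ∀ t, a < t → -(k t * f t) ≤ f' t) (ht : a ≤ t) :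
    f a ≤ f t * Real.exp (∫ s in Ici a, k s) := by
  have hmono := monotoneOn_mul_exp_of_hasDerivWithinAt hf
    (fun t ht => hasDerivWithinAt_integral_Ici hk_cont ht) hf'
  calc f a = f a * Real.exp (∫ s in a..a, k s) := by simp
    _ ≤ f t * Real.exp (∫ s in a..t, k s) := hmono self_mem_Ici ht ht
    _ ≤ f t * Real.exp (∫ s in Ici a, k s) := by
      gcongr
      · exact hf_nonneg t ht
      · exact intervalIntegral_le_integral_Ici hk_nonneg hk_int ht

theorem liminf_pos_of_eventually_le {α : Type*} {l : Filter α} [l.NeBot] {f : α → ℝ} {c C : ℝ}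
    (hc : 0 < c) (hlow : ∀ᶠ x in l, c ≤ f x) (hup : ∀ᶠ x in l, f x ≤ C) : 0 < liminf f l :=
  hc.trans_le (le_liminf_of_le (isCoboundedUnder_ge_of_eventually_le l hup) hlow)

section KirchhoffEnergy

variable {H : Type*} [NormedAddCommGroup H] [InnerProductSpace ℝ H]

noncomputable def kirchhoffEnergy (B : H →L[ℝ] H) (m : ℝ → ℝ) (ε : ℝ) (u u' : ℝ → H)
    (t : ℝ) : ℝ :=
  ε * ‖u' t‖ ^ 2 + ∫ σ in (0 : ℝ)..‖B (u t)‖ ^ 2, m σ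

variable {A B : H →L[ℝ] H} {m : ℝ → ℝ} {ε : ℝ} {u u' u'' : ℝ → H}

theorem hasDerivWithinAt_kirchhoffEnergy (hAB : ∀ x y, ⟪B x, B y⟫ = ⟪A x, y⟫)
    (hm : Continuous m) {β : ℝ} {s : Set ℝ} {t : ℝ}
    (hu : HasDerivWithinAt u (u' t) s t) (hu' : HasDerivWithinAt u' (u'' t) s t)
    (heq : ε • u'' t + β • u' t + m (‖B (u t)‖ ^ 2) • A (u t) = 0) :
    HasDerivWithinAt (kirchhoffEnergy B m ε u u') (-(2 * β * ‖u' t‖ ^ 2)) s t := by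
  have hM := (hm.integral_hasStrictDerivAt 0 (‖B (u t)‖ ^ 2)).hasDerivAt
  have hd := (hu'.norm_sq.const_mul ε).add
    (hM.comp_hasDerivWithinAt t (B.hasFDerivAt.comp_hasDerivWithinAt t hu).norm_sq)
  -- pairing the equation with `u'` gives the energy identity
  have hpair : ⟪u' t, ε • u'' t + β • u' t + m (‖B (u t)‖ ^ 2) • A (u t)⟫ = 0 := by
    rw [heq, inner_zero_right]
  rw [inner_add_right, inner_add_right, real_inner_smul_right, real_inner_smul_right,
    real_inner_smul_right, real_inner_self_eq_norm_sq] at hpair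
  refine hd.congr_deriv ?_
  rw [Function.comp_apply, hAB, real_inner_comm (u' t) (A (u t))]
  linear_combination 2 * hpair

theorem le_kirchhoffEnergy (hm : Continuous m) {μ : ℝ} (hm_lb : ∀ σ, 0 ≤ σ → μ ≤ m σ) (t : ℝ) :
    ε * ‖u' t‖ ^ 2 + μ * ‖B (u t)‖ ^ 2 ≤ kirchhoffEnergy B m ε u u' t := by
  have := mul_sub_le_intervalIntegral_of_le (hm.intervalIntegrable 0 (‖B (u t)‖ ^ 2))
    (sq_nonneg _) fun x hx => hm_lb x hx.1
  rw [sub_zero] at this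
  unfold kirchhoffEnergy
  linarith

theorem min_mul_le_kirchhoffEnergy (hm : Continuous m) {μ : ℝ}
    (hm_lb : ∀ σ, 0 ≤ σ → μ ≤ m σ) (t : ℝ) :
    min ε μ * (‖u' t‖ ^ 2 + ‖B (u t)‖ ^ 2) ≤ kirchhoffEnergy B m ε u u' t := by
  nlinarith [le_kirchhoffEnergy (B := B) (ε := ε) (u := u) (u' := u') hm hm_lb t,
    min_le_left ε μ, min_le_right ε μ, sq_nonneg ‖u' t‖, sq_nonneg ‖B (u t)‖]

theorem kirchhoffEnergy_le_max_mul (hm : Continuous m) {K t : ℝ}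
    (hm_ub : ∀ σ ∈ Icc 0 (‖B (u t)‖ ^ 2), m σ ≤ K) :
    kirchhoffEnergy B m ε u u' t ≤ max ε K * (‖u' t‖ ^ 2 + ‖B (u t)‖ ^ 2) := by
  have := intervalIntegral_le_mul_sub_of_le (hm.intervalIntegrable 0 (‖B (u t)‖ ^ 2))
    (sq_nonneg _) hm_ub
  rw [sub_zero] at this
  unfold kirchhoffEnergy
  nlinarith [le_max_left ε K, le_max_right ε K, sq_nonneg ‖u' t‖, sq_nonneg ‖B (u t)‖]

variable {b : ℝ → ℝ}

theorem antitoneOn_kirchhoffEnergy (hb : ∀ t, 0 ≤ t → 0 ≤ b t)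
    (hE : ∀ t, 0 ≤ t →
      HasDerivWithinAt (kirchhoffEnergy B m ε u u') (-(2 * b t * ‖u' t‖ ^ 2)) (Ici 0) t) :
    AntitoneOn (kirchhoffEnergy B m ε u u') (Ici 0) := fun s hs t ht hst =>
  neg_le_neg_iff.1 <| monotoneOn_Ici_of_hasDerivWithinAt_nonneg (fun t ht => (hE t ht).neg)
    (fun t ht => by rw [neg_neg]; have := hb t ht.le; positivity) hs ht hst

theorem kirchhoffEnergy_zero_le_mul_exp (hm : Continuous m) {μ : ℝ} (hμ : 0 ≤ μ)
    (hm_lb : ∀ σ, 0 ≤ σ → μ ≤ m σ) (hε : 0 < ε) (hb_cont : ContinuousOn b (Ici 0))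
    (hb : ∀ t, 0 ≤ t → 0 ≤ b t) (hb_int : IntegrableOn b (Ici 0))
    (hE : ∀ t, 0 ≤ t →
      HasDerivWithinAt (kirchhoffEnergy B m ε u u') (-(2 * b t * ‖u' t‖ ^ 2)) (Ici 0) t)
    {t : ℝ} (ht : 0 ≤ t) :
    kirchhoffEnergy B m ε u u' 0 ≤
      kirchhoffEnergy B m ε u u' t * Real.exp (∫ s in Ici 0, 2 / ε * b s) := by
  have hεE : ∀ t, ε * ‖u' t‖ ^ 2 ≤ kirchhoffEnergy B m ε u u' t := fun t => by
    nlinarith [le_kirchhoffEnergy (B := B) (ε := ε) (u := u) (u' := u') hm hm_lb t,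
      sq_nonneg ‖B (u t)‖]
  refine le_mul_exp_integral_of_hasDerivWithinAt hE
    (fun t _ => (by positivity : 0 ≤ ε * ‖u' t‖ ^ 2).trans (hεE t))
    (continuousOn_const.mul hb_cont) (fun t ht => by have := hb t ht; positivity)
    (hb_int.const_mul _) (fun t ht => neg_le_neg ?_) ht
  -- the damping term dissipates at most the fraction `(2/ε) b` of the energy
  have := hb t ht.le
  calc 2 * b t * ‖u' t‖ ^ 2 = 2 / ε * b t * (ε * ‖u' t‖ ^ 2) := by field_simp
    _ ≤ 2 / ε * b t * kirchhoffEnergy B m ε u u' t := by gcongr; exact hεE t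

end KirchhoffEnergy

theorem stmt_5_general {H : Type*} [NormedAddCommGroup H] [InnerProductSpace ℝ H]
    (A B : H →L[ℝ] H)
    (hB_sq : ∀ x, B (B x) = A x)
    (hB_sa : ∀ x y, ⟪B x, y⟫ = ⟪x, B y⟫)
    (m : ℝ → ℝ) (hm : ContDiff ℝ 1 m)
    (μ₁ : ℝ) (hμ₁ : 0 < μ₁) (hm_lb : ∀ σ, 0 ≤ σ → μ₁ ≤ m σ)
    (b : ℝ → ℝ) (hb_cont : ContinuousOn b (Set.Ici 0))
    (hb_pos : ∀ t, 0 ≤ t → 0 < b t)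
    (hb_int : MeasureTheory.IntegrableOn b (Set.Ici 0))
    (u₀ u₁ : H) (hdata : 0 < ‖u₁‖ ^ 2 + ‖B u₀‖ ^ 2)
    (ε : ℝ) (hε : 0 < ε)
    (u u' u'' : ℝ → H)
    (hu0 : u 0 = u₀) (hu1 : u' 0 = u₁)
    (hu : ∀ t, 0 ≤ t → HasDerivWithinAt u (u' t) (Set.Ici 0) t)
    (hu' : ∀ t, 0 ≤ t → HasDerivWithinAt u' (u'' t) (Set.Ici 0) t)
    (heq : ∀ t, 0 ≤ t →
      ε • u'' t + b t • u' t + m (‖B (u t)‖ ^ 2) • A (u t) = 0) :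
    0 < Filter.liminf (fun t => ‖u' t‖ ^ 2 + ‖B (u t)‖ ^ 2) Filter.atTop := by
  have hmc : Continuous m := hm.continuous
  have hb : ∀ t, 0 ≤ t → 0 ≤ b t := fun t ht => (hb_pos t ht).le
  set E := kirchhoffEnergy B m ε u u'
  set S : ℝ → ℝ := fun t => ‖u' t‖ ^ 2 + ‖B (u t)‖ ^ 2
  have hδ : 0 < min ε μ₁ := lt_min hε hμ₁
  have hE_deriv : ∀ t, 0 ≤ t → HasDerivWithinAt E (-(2 * b t * ‖u' t‖ ^ 2)) (Ici 0) t :=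
    fun t ht => hasDerivWithinAt_kirchhoffEnergy (fun x y => by rw [← hB_sa, hB_sq]) hmc
      (hu t ht) (hu' t ht) (heq t ht)
  have hS_bound : ∀ t, 0 ≤ t → S t ≤ E 0 / min ε μ₁ := fun t ht => by
    rw [le_div_iff₀ hδ, mul_comm]
    exact (min_mul_le_kirchhoffEnergy hmc hm_lb t).trans
      (antitoneOn_kirchhoffEnergy hb hE_deriv self_mem_Ici ht ht)
  have hE0 : 0 < E 0 := by
    have : 0 < S 0 := by simpa [S, hu0, hu1] using hdata
    exact (mul_pos hδ this).trans_le (min_mul_le_kirchhoffEnergy hmc hm_lb 0)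
  obtain ⟨K, hK⟩ :=
    isCompact_Icc.bddAbove_image (hmc.continuousOn (s := Icc 0 (E 0 / min ε μ₁)))
  have hE_le : ∀ t, 0 ≤ t → E t ≤ max ε K * S t := fun t ht =>
    kirchhoffEnergy_le_max_mul hmc fun σ hσ => hK (mem_image_of_mem m
      ⟨hσ.1, hσ.2.trans ((le_add_of_nonneg_left (sq_nonneg _)).trans (hS_bound t ht))⟩)
  set I := ∫ s in Ici 0, 2 / ε * b s
  have hK_pos : 0 < max ε K := lt_max_of_lt_left hε
  refine liminf_pos_of_eventually_le (c := E 0 / (Real.exp I * max ε K)) (by positivity)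
    ?_ (eventually_ge_atTop 0 |>.mono hS_bound)
  filter_upwards [eventually_ge_atTop 0] with t ht
  rw [div_le_iff₀ (by positivity)]
  calc E 0 ≤ E t * Real.exp I :=
        kirchhoffEnergy_zero_le_mul_exp hmc hμ₁.le hm_lb hε hb_cont hb hb_int hE_deriv ht
    _ ≤ max ε K * S t * Real.exp I := by gcongr; exact hE_le t ht
    _ = S t * (Real.exp I * max ε K) := by ring

/-- Supercritical case: if the damping coefficient `b` is integrable, then a global
solution of `ε u'' + b(t) u' + m(|A^{1/2}u|²) A u = 0` with nontrivial data does not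
decay: `liminf_{t→∞} (|u'(t)|² + |A^{1/2}u(t)|²) > 0`. -/
theorem stmt_5 {H : Type*} [NormedAddCommGroup H] [InnerProductSpace ℝ H]
    (A B : H →L[ℝ] H)
    (hB_sq : ∀ x, B (B x) = A x)
    (hA_sa : ∀ x y, ⟪A x, y⟫ = ⟪x, A y⟫)
    (hB_sa : ∀ x y, ⟪B x, y⟫ = ⟪x, B y⟫)
    (hA_nonneg : ∀ x, 0 ≤ ⟪A x, x⟫)
    (m : ℝ → ℝ) (hm : ContDiff ℝ 1 m)
    (μ₁ : ℝ) (hμ₁ : 0 < μ₁) (hm_lb : ∀ σ, 0 ≤ σ → μ₁ ≤ m σ)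
    (b : ℝ → ℝ) (hb_cont : ContinuousOn b (Set.Ici 0))
    (hb_pos : ∀ t, 0 ≤ t → 0 < b t)
    (hb_int : MeasureTheory.IntegrableOn b (Set.Ici 0))
    (u₀ u₁ : H) (hdata : 0 < ‖u₁‖ ^ 2 + ‖B u₀‖ ^ 2)
    (ε : ℝ) (hε : 0 < ε)
    (u u' u'' : ℝ → H)
    (hu0 : u 0 = u₀) (hu1 : u' 0 = u₁)
    (hu : ∀ t, 0 ≤ t → HasDerivWithinAt u (u' t) (Set.Ici 0) t)
    (hu' : ∀ t, 0 ≤ t → HasDerivWithinAt u' (u'' t) (Set.Ici 0) t)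
    (hu''_cont : ContinuousOn u'' (Set.Ici 0))
    (heq : ∀ t, 0 ≤ t →
      ε • u'' t + b t • u' t + m (‖B (u t)‖ ^ 2) • A (u t) = 0) :
    0 < Filter.liminf (fun t => ‖u' t‖ ^ 2 + ‖B (u t)‖ ^ 2) Filter.atTop :=
  stmt_5_general A B hB_sq hB_sa m hm μ₁ hμ₁ hm_lb b hb_cont hb_pos hb_int u₀ u₁ hdata ε hε u u' u''
    hu0 hu1 hu hu' heq
end

section
/- Let $u$ solve $u'(t)=-(1+t)\,m(|A^{1/2}u(t)|^2)Au(t)$ with $u_0\in D(A^{k/2})$, $k\ge 1$, $m\ge\mu_1>0$. Then there is a constant $\gamma_k$ depending only on $k$ and $\mu_1$ such that $(1+t)^{2k}|A^{k/2}u(t)|^2\le\gamma_k(|u_0|^2+|A^{k/2}u_0|^2)$ for all $t\ge0$, and $\int_0^{+\infty}(1+s)^{2k+1}|A^{(k+1)/2}u(s)|^2\,ds\le\gamma_k(|u_0|^2+|A^{k/2}u_0|^2)$. -/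
/-!
Differentiating `t ^ p * ‖B ^ n u(t)‖²` along the flow and using `c t ≥ μ (1 + t)` gives the
energy inequality
`T^p ‖Bⁿu(T)‖² + 2μ ∫₀ᵀ (s^p + s^(p+1)) ‖Bⁿ⁺¹u‖² ≤ 0^p ‖Bⁿu(0)‖² + p ∫₀ᵀ s^(p-1) ‖Bⁿu‖²`.
For `p = 2j + 2`, `n = j + 1` its right-hand side is the dissipation integral
`∫₀ᵀ s^(2j+1) ‖Bʲ⁺¹u‖²` of level `j`, so induction on `j` bounds
`T^(2j) ‖Bʲu(T)‖² + 2μ ∫₀ᵀ s^(2j+1) ‖Bʲ⁺¹u‖²` by `j!/μʲ ‖u(0)‖²`, with no intermediate norms of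
the initial datum. For `p = 0` it bounds `‖Bᵏu(T)‖²` and `2μ ∫₀ᵀ ‖Bᵏ⁺¹u‖²` by `‖Bᵏu(0)‖²`.
Since `(1 + t)^q ≤ 2^q (1 + t^q)`, the two combine into the decay estimates.
-/

open scoped RealInnerProductSpace Nat
open Set MeasureTheory Filter

lemma one_add_pow_le_two_pow_mul {t : ℝ} (ht : 0 ≤ t) (q : ℕ) :
    (1 + t) ^ q ≤ 2 ^ q * (1 + t ^ q) :=
  calc (1 + t) ^ q ≤ 2 ^ (q - 1) * (1 ^ q + t ^ q) := add_pow_le zero_le_one ht q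
    _ ≤ 2 ^ q * (1 + t ^ q) := by
        rw [one_pow]; gcongr; exacts [one_le_two, Nat.sub_le q 1]

lemma integral_Ioi_le_of_forall_intervalIntegral_le {f : ℝ → ℝ} {M : ℝ}
    (hf : ContinuousOn f (Ici 0)) (hf₀ : ∀ s, 0 ≤ s → 0 ≤ f s)
    (hM : ∀ T, 0 ≤ T → ∫ s in (0:ℝ)..T, f s ≤ M) :
    ∫ s in Ioi (0:ℝ), f s ≤ M := by
  have hloc : ∀ T, IntegrableOn f (Ioc 0 T) := fun T =>
    (hf.mono Icc_subset_Ici_self).integrableOn_Icc.mono_set Ioc_subset_Icc_self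
  have hint : IntegrableOn f (Ioi 0) := by
    refine integrableOn_Ioi_of_intervalIntegral_norm_bounded M 0 hloc tendsto_id ?_
    filter_upwards [eventually_ge_atTop 0] with T hT
    rw [intervalIntegral.integral_congr fun s hs => Real.norm_of_nonneg (hf₀ s ?_)]
    · exact hM T hT
    · exact (uIcc_of_le hT ▸ hs).1
  exact le_of_tendsto (intervalIntegral_tendsto_integral_Ioi 0 hint tendsto_id)
    (eventually_ge_atTop 0 |>.mono hM)

section Parabolic

variable {H : Type*} [NormedAddCommGroup H] [InnerProductSpace ℝ H] {B : H →L[ℝ] H}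

lemma inner_pow_apply_pow_sq_apply (hB : (B : H →ₗ[ℝ] H).IsSymmetric) (n : ℕ) (x : H) :
    ⟪(B ^ n) x, (B ^ n) ((B ^ 2) x)⟫ = ‖(B ^ (n + 1)) x‖ ^ 2 := by
  have hshift : (B ^ n) ((B ^ 2) x) = B ((B ^ (n + 1)) x) := by
    rw [← mul_apply_eq_comp, ← pow_add, ← mul_apply_eq_comp, ← pow_succ']
  have hsucc : B ((B ^ n) x) = (B ^ (n + 1)) x := by
    rw [← mul_apply_eq_comp, ← pow_succ']
  rw [hshift, ← real_inner_self_eq_norm_sq, ← hsucc]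
  exact (hB _ _).symm

lemma HasDerivWithinAt.norm_pow_apply_sq (hB : (B : H →ₗ[ℝ] H).IsSymmetric) {u : ℝ → H}
    {c t : ℝ} {s : Set ℝ} (hu : HasDerivWithinAt u (-(c • (B ^ 2) (u t))) s t) (n : ℕ) :
    HasDerivWithinAt (fun τ => ‖(B ^ n) (u τ)‖ ^ 2)
      (-(2 * c) * ‖(B ^ (n + 1)) (u t)‖ ^ 2) s t := by
  have hBu : HasDerivWithinAt (fun τ => (B ^ n) (u τ)) ((B ^ n) (-(c • (B ^ 2) (u t)))) s t :=
    (B ^ n).hasFDerivAt.comp_hasDerivWithinAt t hu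
  convert hBu.norm_sq using 1
  rw [map_neg, ContinuousLinearMap.map_smul, inner_neg_right, inner_smul_right,
    inner_pow_apply_pow_sq_apply hB]
  ring

variable {u : ℝ → H}

lemma continuousOn_norm_pow_apply_sq {s : Set ℝ} (hu : ContinuousOn u s) (n : ℕ) :
    ContinuousOn (fun t => ‖(B ^ n) (u t)‖ ^ 2) s :=
  ((B ^ n).continuous.comp_continuousOn hu).norm.pow 2

lemma intervalIntegrable_pow_mul_norm_pow_apply_sq (hu : ContinuousOn u (Ici 0)) (q n : ℕ)
    {T : ℝ} (hT : 0 ≤ T) :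
    IntervalIntegrable (fun s => s ^ q * ‖(B ^ n) (u s)‖ ^ 2) volume 0 T :=
  ((continuous_pow q).continuousOn.mul (continuousOn_norm_pow_apply_sq hu n)).mono
    Icc_subset_Ici_self |>.intervalIntegrable_of_Icc hT

lemma integral_pow_mul_norm_pow_apply_sq_nonneg (q n : ℕ) {T : ℝ} (hT : 0 ≤ T) :
    0 ≤ ∫ s in (0:ℝ)..T, s ^ q * ‖(B ^ n) (u s)‖ ^ 2 :=
  intervalIntegral.integral_nonneg hT fun s hs => by have := hs.1; positivity

/-- The Kirchhoff equation is the case `c(t) = (1 + t) m(‖B u(t)‖²)`. -/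
structure IsParabolicSolution (B : H →L[ℝ] H) (μ : ℝ) (c : ℝ → ℝ) (u : ℝ → H) : Prop where
  hasDerivWithinAt : ∀ t, 0 ≤ t → HasDerivWithinAt u (-(c t • (B ^ 2) (u t))) (Ici 0) t
  le_coeff : ∀ t, 0 ≤ t → μ * (1 + t) ≤ c t

namespace IsParabolicSolution

variable {μ : ℝ} {c : ℝ → ℝ}

lemma continuousOn (hu : IsParabolicSolution B μ c u) : ContinuousOn u (Ici 0) :=
  fun t ht => (hu.hasDerivWithinAt t ht).continuousWithinAt

lemma weighted_energy_le (hu : IsParabolicSolution B μ c u) (hB : (B : H →ₗ[ℝ] H).IsSymmetric)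
    (n p : ℕ) {T : ℝ} (hT : 0 ≤ T) :
    T ^ p * ‖(B ^ n) (u T)‖ ^ 2
        + 2 * μ * ((∫ s in (0:ℝ)..T, s ^ p * ‖(B ^ (n + 1)) (u s)‖ ^ 2)
          + ∫ s in (0:ℝ)..T, s ^ (p + 1) * ‖(B ^ (n + 1)) (u s)‖ ^ 2)
      ≤ 0 ^ p * ‖(B ^ n) (u 0)‖ ^ 2
        + p * ∫ s in (0:ℝ)..T, s ^ (p - 1) * ‖(B ^ n) (u s)‖ ^ 2 := by
  have hint := intervalIntegrable_pow_mul_norm_pow_apply_sq (B := B) hu.continuousOn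
  have hderiv : ∀ t, 0 ≤ t → HasDerivWithinAt (fun s => s ^ p * ‖(B ^ n) (u s)‖ ^ 2)
      (p * t ^ (p - 1) * ‖(B ^ n) (u t)‖ ^ 2
        + t ^ p * (-(2 * c t) * ‖(B ^ (n + 1)) (u t)‖ ^ 2)) (Ici 0) t := fun t ht =>
    (hasDerivAt_pow p t).hasDerivWithinAt.mul ((hu.hasDerivWithinAt t ht).norm_pow_apply_sq hB n)
  have hderiv_le : ∀ t ∈ Ioo 0 T, p * t ^ (p - 1) * ‖(B ^ n) (u t)‖ ^ 2
      + t ^ p * (-(2 * c t) * ‖(B ^ (n + 1)) (u t)‖ ^ 2)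
      ≤ p * (t ^ (p - 1) * ‖(B ^ n) (u t)‖ ^ 2) - 2 * μ * (t ^ p * ‖(B ^ (n + 1)) (u t)‖ ^ 2
        + t ^ (p + 1) * ‖(B ^ (n + 1)) (u t)‖ ^ 2) := by
    intro t ht
    have hN : 0 ≤ t ^ p * ‖(B ^ (n + 1)) (u t)‖ ^ 2 := by have := ht.1.le; positivity
    have := mul_le_mul_of_nonneg_left (hu.le_coeff t ht.1.le) hN
    rw [pow_succ t p]
    linarith
  have hφ₁ := (hint (p - 1) n hT).const_mul (p : ℝ)
  have hφ₂ := ((hint p (n + 1) hT).add (hint (p + 1) (n + 1) hT)).const_mul (2 * μ)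
  have hFTC := intervalIntegral.sub_le_integral_of_hasDeriv_right_of_le hT
    (fun t ht => (hderiv t ht.1).continuousWithinAt.mono Icc_subset_Ici_self)
    (fun t ht => (hderiv t ht.1.le).mono (Ioi_subset_Ici ht.1.le))
    ((intervalIntegrable_iff_integrableOn_Icc_of_le hT).1 (hφ₁.sub hφ₂)) hderiv_le
  rw [intervalIntegral.integral_sub hφ₁ hφ₂, intervalIntegral.integral_const_mul,
    intervalIntegral.integral_const_mul,
    intervalIntegral.integral_add (hint p (n + 1) hT) (hint (p + 1) (n + 1) hT)] at hFTC
  linarith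

lemma weighted_energy_le_factorial (hu : IsParabolicSolution B μ c u)
    (hB : (B : H →ₗ[ℝ] H).IsSymmetric) (hμ : 0 < μ) (j : ℕ) {T : ℝ} (hT : 0 ≤ T) :
    T ^ (2 * j) * ‖(B ^ j) (u T)‖ ^ 2
        + 2 * μ * ∫ s in (0:ℝ)..T, s ^ (2 * j + 1) * ‖(B ^ (j + 1)) (u s)‖ ^ 2
      ≤ j ! / μ ^ j * ‖u 0‖ ^ 2 := by
  induction j with
  | zero =>
    have h := hu.weighted_energy_le hB 0 0 hT
    have h₀ := integral_pow_mul_norm_pow_apply_sq_nonneg (u := u) (B := B) 0 1 hT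
    simp only [pow_zero, one_mul, Nat.cast_zero, zero_mul, add_zero, mul_zero, zero_add,
      Nat.factorial_zero, Nat.cast_one, div_one, one_apply_eq_self] at h h₀ ⊢
    linarith [mul_nonneg hμ.le h₀]
  | succ j ih =>
    have h := hu.weighted_energy_le hB (j + 1) (2 * j + 2) hT
    have h₀ := integral_pow_mul_norm_pow_apply_sq_nonneg (u := u) (B := B) (2 * j + 2) (j + 2) hT
    rw [zero_pow (by omega), zero_mul, zero_add, show 2 * j + 2 - 1 = 2 * j + 1 by omega] at h
    set I := ∫ s in (0:ℝ)..T, s ^ (2 * j + 1) * ‖(B ^ (j + 1)) (u s)‖ ^ 2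
    have hI : 2 * μ * I ≤ j ! / μ ^ j * ‖u 0‖ ^ 2 := by
      have : 0 ≤ T ^ (2 * j) * ‖(B ^ j) (u T)‖ ^ 2 := by positivity
      linarith
    have hI' : ((2 * j + 2 : ℕ) : ℝ) * I ≤ (j + 1)! / μ ^ (j + 1) * ‖u 0‖ ^ 2 :=
      calc ((2 * j + 2 : ℕ) : ℝ) * I = (j + 1) / μ * (2 * μ * I) := by
            push_cast; field_simp
        _ ≤ (j + 1) / μ * (j ! / μ ^ j * ‖u 0‖ ^ 2) := by gcongr
        _ = (j + 1)! / μ ^ (j + 1) * ‖u 0‖ ^ 2 := by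
            rw [Nat.factorial_succ]; push_cast; field_simp; ring
    rw [show 2 * (j + 1) = 2 * j + 2 by ring]
    linarith [mul_nonneg hμ.le h₀]

lemma energy_le (hu : IsParabolicSolution B μ c u) (hB : (B : H →ₗ[ℝ] H).IsSymmetric)
    (hμ : 0 < μ) (n : ℕ) {T : ℝ} (hT : 0 ≤ T) :
    ‖(B ^ n) (u T)‖ ^ 2 + 2 * μ * ∫ s in (0:ℝ)..T, ‖(B ^ (n + 1)) (u s)‖ ^ 2
      ≤ ‖(B ^ n) (u 0)‖ ^ 2 := by
  have h := hu.weighted_energy_le hB n 0 hT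
  have h₀ := integral_pow_mul_norm_pow_apply_sq_nonneg (u := u) (B := B) 1 (n + 1) hT
  simp only [pow_zero, one_mul, Nat.cast_zero, zero_mul, add_zero, zero_add] at h
  linarith [mul_nonneg hμ.le h₀]

lemma one_add_pow_mul_norm_pow_apply_sq_le (hu : IsParabolicSolution B μ c u)
    (hB : (B : H →ₗ[ℝ] H).IsSymmetric) (hμ : 0 < μ) (k : ℕ) {t : ℝ} (ht : 0 ≤ t) :
    (1 + t) ^ (2 * k) * ‖(B ^ k) (u t)‖ ^ 2
      ≤ 2 ^ (2 * k) * (‖(B ^ k) (u 0)‖ ^ 2 + k ! / μ ^ k * ‖u 0‖ ^ 2) := by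
  have hflat := hu.energy_le hB hμ k ht
  have hweighted := hu.weighted_energy_le_factorial hB hμ k ht
  have h₀ : 0 ≤ ∫ s in (0:ℝ)..t, ‖(B ^ (k + 1)) (u s)‖ ^ 2 :=
    intervalIntegral.integral_nonneg ht fun s _ => by positivity
  have h₁ := integral_pow_mul_norm_pow_apply_sq_nonneg (u := u) (B := B) (2 * k + 1) (k + 1) ht
  calc (1 + t) ^ (2 * k) * ‖(B ^ k) (u t)‖ ^ 2
      ≤ 2 ^ (2 * k) * (1 + t ^ (2 * k)) * ‖(B ^ k) (u t)‖ ^ 2 := by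
        gcongr; exact one_add_pow_le_two_pow_mul ht _
    _ ≤ 2 ^ (2 * k) * (‖(B ^ k) (u 0)‖ ^ 2 + k ! / μ ^ k * ‖u 0‖ ^ 2) := by
        rw [mul_assoc]
        gcongr
        linarith [mul_nonneg hμ.le h₀, mul_nonneg hμ.le h₁]

lemma integral_one_add_pow_mul_norm_pow_apply_sq_le (hu : IsParabolicSolution B μ c u)
    (hB : (B : H →ₗ[ℝ] H).IsSymmetric) (hμ : 0 < μ) (k : ℕ) :
    ∫ s in Ioi (0:ℝ), (1 + s) ^ (2 * k + 1) * ‖(B ^ (k + 1)) (u s)‖ ^ 2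
      ≤ 2 ^ (2 * k) * (‖(B ^ k) (u 0)‖ ^ 2 + k ! / μ ^ k * ‖u 0‖ ^ 2) / μ := by
  have hN := continuousOn_norm_pow_apply_sq (B := B) hu.continuousOn (k + 1)
  have hweight : ∀ q : ℕ, ContinuousOn (fun s : ℝ => (1 + s) ^ q) (Ici 0) :=
    fun q => ((continuous_const.add continuous_id).pow q).continuousOn
  refine integral_Ioi_le_of_forall_intervalIntegral_le ((hweight _).mul hN)
    (fun s hs => by positivity) fun T hT => ?_
  have hint : ∀ {f : ℝ → ℝ}, ContinuousOn f (Ici 0) → IntervalIntegrable f volume 0 T :=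
    fun hf => (hf.mono Icc_subset_Ici_self).intervalIntegrable_of_Icc hT
  have hflat := hu.energy_le hB hμ k hT
  have hweighted := hu.weighted_energy_le_factorial hB hμ k hT
  have : 0 ≤ ‖(B ^ k) (u T)‖ ^ 2 := by positivity
  have : 0 ≤ T ^ (2 * k) * ‖(B ^ k) (u T)‖ ^ 2 := by positivity
  calc ∫ s in (0:ℝ)..T, (1 + s) ^ (2 * k + 1) * ‖(B ^ (k + 1)) (u s)‖ ^ 2
      ≤ ∫ s in (0:ℝ)..T, 2 ^ (2 * k + 1) * (‖(B ^ (k + 1)) (u s)‖ ^ 2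
          + s ^ (2 * k + 1) * ‖(B ^ (k + 1)) (u s)‖ ^ 2) := by
        refine intervalIntegral.integral_mono_on hT (hint ((hweight _).mul hN))
          (hint (continuousOn_const.mul (hN.add ((continuous_pow _).continuousOn.mul hN))))
          fun s hs => ?_
        have := one_add_pow_le_two_pow_mul hs.1 (2 * k + 1)
        calc (1 + s) ^ (2 * k + 1) * ‖(B ^ (k + 1)) (u s)‖ ^ 2
            ≤ 2 ^ (2 * k + 1) * (1 + s ^ (2 * k + 1)) * ‖(B ^ (k + 1)) (u s)‖ ^ 2 := by gcongr
          _ = _ := by ring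
    _ = 2 ^ (2 * k + 1) * ((∫ s in (0:ℝ)..T, ‖(B ^ (k + 1)) (u s)‖ ^ 2)
          + ∫ s in (0:ℝ)..T, s ^ (2 * k + 1) * ‖(B ^ (k + 1)) (u s)‖ ^ 2) := by
        rw [intervalIntegral.integral_const_mul, intervalIntegral.integral_add (hint hN)
          (intervalIntegrable_pow_mul_norm_pow_apply_sq hu.continuousOn _ _ hT)]
    _ ≤ 2 ^ (2 * k + 1) * ((‖(B ^ k) (u 0)‖ ^ 2 + k ! / μ ^ k * ‖u 0‖ ^ 2) / (2 * μ)) := by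
        gcongr
        rw [le_div_iff₀ (by positivity)]
        linarith
    _ = _ := by field_simp; ring

end IsParabolicSolution

end Parabolic

theorem stmt_9_general (k : ℕ) (μ₁ : ℝ) (hμ₁ : 0 < μ₁) :
    ∃ γ : ℝ, 0 < γ ∧
      ∀ (H : Type) [NormedAddCommGroup H] [InnerProductSpace ℝ H],
        ∀ (B : H →L[ℝ] H),
          (∀ x y, ⟪B x, y⟫ = ⟪x, B y⟫) →
          (∀ x, 0 ≤ ⟪B x, x⟫) →
          ∀ (m : ℝ → ℝ), ContDiff ℝ 1 m → (∀ σ, 0 ≤ σ → μ₁ ≤ m σ) →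
          ∀ (u u' : ℝ → H) (u₀ : H), u 0 = u₀ →
            (∀ t, 0 ≤ t → HasDerivWithinAt u (u' t) (Set.Ici 0) t) →
            ContinuousOn u' (Set.Ici 0) →
            (∀ t, 0 ≤ t →
              u' t = -(((1 + t) * m (‖B (u t)‖ ^ 2)) • (B ^ 2) (u t))) →
            (∀ t, 0 ≤ t →
              (1 + t) ^ (2 * k) * ‖(B ^ k) (u t)‖ ^ 2 ≤
                γ * (‖u₀‖ ^ 2 + ‖(B ^ k) u₀‖ ^ 2)) ∧
            (∫ s in Set.Ioi (0:ℝ), (1 + s) ^ (2 * k + 1) * ‖(B ^ (k + 1)) (u s)‖ ^ 2) ≤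
              γ * (‖u₀‖ ^ 2 + ‖(B ^ k) u₀‖ ^ 2) := by
  set K : ℝ := k ! / μ₁ ^ k
  refine ⟨2 ^ (2 * k) * (1 + K) * (1 + 1 / μ₁), by positivity, ?_⟩
  intro H _ _ B hB _ m _ hm u u' u₀ hu₀ hderiv _ heq
  have hu : IsParabolicSolution B μ₁ (fun t => (1 + t) * m (‖B (u t)‖ ^ 2)) u :=
    ⟨fun t ht => heq t ht ▸ hderiv t ht, fun t ht => by
      rw [mul_comm]; exact mul_le_mul_of_nonneg_left (hm _ (sq_nonneg _)) (by linarith)⟩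
  subst hu₀
  have hγ : ∀ r, 0 ≤ r → r ≤ 1 + 1 / μ₁ →
      2 ^ (2 * k) * (‖(B ^ k) (u 0)‖ ^ 2 + K * ‖u 0‖ ^ 2) * r
        ≤ 2 ^ (2 * k) * (1 + K) * (1 + 1 / μ₁) * (‖u 0‖ ^ 2 + ‖(B ^ k) (u 0)‖ ^ 2) := by
    intro r hr₀ hr
    have hK : 0 ≤ K := by positivity
    have : ‖(B ^ k) (u 0)‖ ^ 2 + K * ‖u 0‖ ^ 2 ≤ (1 + K) * (‖u 0‖ ^ 2 + ‖(B ^ k) (u 0)‖ ^ 2) := by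
      nlinarith [sq_nonneg ‖u 0‖, sq_nonneg ‖(B ^ k) (u 0)‖]
    calc _ ≤ 2 ^ (2 * k) * ((1 + K) * (‖u 0‖ ^ 2 + ‖(B ^ k) (u 0)‖ ^ 2)) * (1 + 1 / μ₁) := by
          gcongr
      _ = _ := by ring
  refine ⟨fun t ht => ?_, ?_⟩
  · exact (hu.one_add_pow_mul_norm_pow_apply_sq_le hB hμ₁ k ht).trans
      (by simpa using hγ 1 zero_le_one (by simp; positivity))
  · exact (hu.integral_one_add_pow_mul_norm_pow_apply_sq_le hB hμ₁ k).trans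
      (by rw [div_eq_mul_one_div]; exact hγ _ (by positivity) (by linarith))

/-- Parabolic decay estimates: there is a constant `γₖ` depending only on `k` and `μ₁`
such that `(1+t)^{2k}|A^{k/2}u(t)|² ≤ γₖ(|u₀|²+|A^{k/2}u₀|²)` and
`∫₀^∞ (1+s)^{2k+1}|A^{(k+1)/2}u(s)|² ds ≤ γₖ(|u₀|²+|A^{k/2}u₀|²)`, with `A^{j/2} = B^j`. -/
theorem stmt_9 (k : ℕ) (hk : 1 ≤ k) (μ₁ : ℝ) (hμ₁ : 0 < μ₁) :
    ∃ γ : ℝ, 0 < γ ∧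
      ∀ (H : Type) [NormedAddCommGroup H] [InnerProductSpace ℝ H],
        ∀ (B : H →L[ℝ] H),
          (∀ x y, ⟪B x, y⟫ = ⟪x, B y⟫) →
          (∀ x, 0 ≤ ⟪B x, x⟫) →
          ∀ (m : ℝ → ℝ), ContDiff ℝ 1 m → (∀ σ, 0 ≤ σ → μ₁ ≤ m σ) →
          ∀ (u u' : ℝ → H) (u₀ : H), u 0 = u₀ →
            (∀ t, 0 ≤ t → HasDerivWithinAt u (u' t) (Set.Ici 0) t) →
            ContinuousOn u' (Set.Ici 0) →
            (∀ t, 0 ≤ t →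
              u' t = -(((1 + t) * m (‖B (u t)‖ ^ 2)) • (B ^ 2) (u t))) →
            (∀ t, 0 ≤ t →
              (1 + t) ^ (2 * k) * ‖(B ^ k) (u t)‖ ^ 2 ≤
                γ * (‖u₀‖ ^ 2 + ‖(B ^ k) u₀‖ ^ 2)) ∧
            (∫ s in Set.Ioi (0:ℝ), (1 + s) ^ (2 * k + 1) * ‖(B ^ (k + 1)) (u s)‖ ^ 2) ≤
              γ * (‖u₀‖ ^ 2 + ‖(B ^ k) u₀‖ ^ 2) :=
  stmt_9_general k μ₁ hμ₁
end

section
/- Let $u_\varepsilon$ solve $\varepsilon u''+\frac{1}{1+t}u'+c_\varepsilon(t)Au=0$ on $[0,+\infty)$ with $\mu_1\le c_\varepsilon(t)\le\mu_2$, and suppose $\varepsilon|u_\varepsilon'(t)|^2\le k_1(1+t)^{-2}$ and $\varepsilon|A^{1/2}u_\varepsilon'(t)|^2+|Au_\varepsilon(t)|^2\le k_4(1+t)^{-4}$ for all $t\ge0$. Then $G_\varepsilon(t):=(1+t)^2|u_\varepsilon'(t)|^2$ satisfies, for $\varepsilon\le 1/2$, the differential inequality $G_\varepsilon'(t)\le\frac{1}{\varepsilon(1+t)}\left(-G_\varepsilon(t)+2\mu_2\sqrt{k_4}\sqrt{G_\varepsilon(t)}\right)$,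 and consequently $|u_\varepsilon'(t)|^2\le\frac{\max\{G_\varepsilon(0),4\mu_2^2 k_4\}}{(1+t)^2}$ for all $t\ge 0$. -/
/-!
Eliminating `u''` from `G'` by means of the equation and applying Cauchy–Schwarz together with
`|A u| ≤ √k₄ / (1 + t)²` gives `G' ≤ (-G + 2 μ₂ √k₄ √G) / (ε (1 + t))`. The right-hand side is
nonpositive as soon as `G ≥ 4 μ₂² k₄`, so `G` can never climb above `max (G 0) (4 μ₂² k₄)`.
-/

open Set
open scoped RealInnerProductSpace

theorem image_le_of_deriv_right_nonpos_of_gt {f f' : ℝ → ℝ} {a b M : ℝ}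
    (hf : ContinuousOn f (Icc a b)) (hf' : ∀ x ∈ Ico a b, HasDerivWithinAt f (f' x) (Ici x) x)
    (ha : f a ≤ M) (bound : ∀ x ∈ Ico a b, M < f x → f' x ≤ 0) :
    ∀ ⦃x⦄, x ∈ Icc a b → f x ≤ M := by
  intro x hx
  have hxa : 0 < x - a + 1 := by linarith [hx.1]
  -- The fencing lemma needs `f' < B'` at contact points, so the barrier must stay strictly above `M`.
  have fence : ∀ δ > 0, f x ≤ M + δ * (x - a + 1) := fun δ hδ =>
    image_le_of_deriv_right_lt_deriv_boundary' hf hf' (B := fun y => M + δ * (y - a + 1))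
      (B' := fun _ => δ) (by simp; linarith) (by fun_prop)
      (fun y _ => by
        simpa using ((((hasDerivWithinAt_id y _).sub_const a).add_const 1).const_mul δ).const_add M)
      (fun y hy hfy => (bound y hy (by rw [hfy]; nlinarith [hy.1])).trans_lt hδ) hx
  refine le_of_forall_pos_le_add fun η hη => ?_
  simpa [div_mul_cancel₀ _ hxa.ne'] using fence (η / (x - a + 1)) (by positivity)

theorem HasDerivWithinAt.one_add_sq_mul_norm_sq {H : Type*} [NormedAddCommGroup H]
    [InnerProductSpace ℝ H] {v : ℝ → H} {v' : H} {s : Set ℝ} {t : ℝ}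
    (hv : HasDerivWithinAt v v' s t) :
    HasDerivWithinAt (fun s => (1 + s) ^ 2 * ‖v s‖ ^ 2)
      (2 * (1 + t) * ‖v t‖ ^ 2 + (1 + t) ^ 2 * (2 * ⟪v t, v'⟫)) s t := by
  simpa [Pi.pow_def, Pi.mul_def] using (((hasDerivWithinAt_id t s).const_add 1).pow 2).mul hv.norm_sq

theorem mul_sqrt_le_of_sq_le {c g : ℝ} (h : c ^ 2 ≤ g) : c * √g ≤ g :=
  calc c * √g ≤ √g * √g := mul_le_mul_of_nonneg_right (Real.le_sqrt_of_sq_le h) (Real.sqrt_nonneg g)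
    _ = g := Real.mul_self_sqrt ((sq_nonneg c).trans h)

theorem sq_mul_le_sqrt_of_sq_le_div {a k P : ℝ} (hP : 0 < P) (h : a ^ 2 ≤ k / P ^ 4) :
    P ^ 2 * a ≤ √k := by
  rw [le_div_iff₀ (by positivity)] at h
  exact Real.le_sqrt_of_sq_le (le_of_eq_of_le (by ring) h)

theorem weighted_energy_deriv_le {H : Type*} [NormedAddCommGroup H] [InnerProductSpace ℝ H]
    {x y z : H} {ε c μ K P : ℝ} (hε : 0 < ε) (hε2 : ε ≤ 1 / 2) (hc : 0 ≤ c) (hcμ : c ≤ μ)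
    (hP : 0 < P) (hz : P ^ 2 * ‖z‖ ≤ K) (heq : ε • y + (1 / P) • x + c • z = 0) :
    2 * P * ‖x‖ ^ 2 + P ^ 2 * (2 * ⟪x, y⟫) ≤
      1 / (ε * P) * (-(P ^ 2 * ‖x‖ ^ 2) + 2 * μ * K * √(P ^ 2 * ‖x‖ ^ 2)) := by
  have hxy : ε * ⟪x, y⟫ + 1 / P * ‖x‖ ^ 2 + c * ⟪x, z⟫ = 0 := by
    simpa [inner_add_right, real_inner_smul_right, real_inner_self_eq_norm_sq]
      using congrArg (⟪x, ·⟫) heq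
  have hlhs : 2 * P * ‖x‖ ^ 2 + P ^ 2 * (2 * ⟪x, y⟫) =
      1 / (ε * P) * (2 * (ε - 1) * P ^ 2 * ‖x‖ ^ 2 + 2 * P ^ 3 * (c * -⟪x, z⟫)) := by
    field_simp at hxy ⊢
    linear_combination hxy
  have hcoupling : P ^ 3 * (c * -⟪x, z⟫) ≤ μ * K * (P * ‖x‖) :=
    calc P ^ 3 * (c * -⟪x, z⟫) ≤ P ^ 3 * (μ * (‖x‖ * ‖z‖)) := by
          refine mul_le_mul_of_nonneg_left ?_ (by positivity)
          have hinner : -⟪x, z⟫ ≤ ‖x‖ * ‖z‖ :=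
            (neg_le_abs _).trans (abs_real_inner_le_norm x z)
          exact (mul_le_mul_of_nonneg_left hinner hc).trans
            (mul_le_mul_of_nonneg_right hcμ (by positivity))
      _ = μ * (P ^ 2 * ‖z‖) * (P * ‖x‖) := by ring
      _ ≤ μ * K * (P * ‖x‖) := by gcongr; exact hc.trans hcμ
  rw [hlhs, show P ^ 2 * ‖x‖ ^ 2 = (P * ‖x‖) ^ 2 by ring, Real.sqrt_sq (by positivity)]
  refine mul_le_mul_of_nonneg_left ?_ (by positivity)
  nlinarith [sq_nonneg (P * ‖x‖)]

theorem stmt_17_general {H : Type*} [NormedAddCommGroup H] [InnerProductSpace ℝ H]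
    (A B : H →L[ℝ] H)
    (m : ℝ → ℝ)
    (μ₁ μ₂ k₄ ε : ℝ) (hμ₁ : 0 < μ₁) (hk₄ : 0 < k₄)
    (hε : 0 < ε) (hε2 : ε ≤ 1 / 2)
    (u u' u'' : ℝ → H)
    (hu' : ∀ t, 0 ≤ t → HasDerivWithinAt u' (u'' t) (Set.Ici 0) t)
    (heq : ∀ t, 0 ≤ t →
      ε • u'' t + (1 / (1 + t)) • u' t + m (‖B (u t)‖ ^ 2) • A (u t) = 0)
    (hc_lb : ∀ t, 0 ≤ t → μ₁ ≤ m (‖B (u t)‖ ^ 2))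
    (hc_ub : ∀ t, 0 ≤ t → m (‖B (u t)‖ ^ 2) ≤ μ₂)
    (hdecay4 : ∀ t, 0 ≤ t →
      ε * ‖B (u' t)‖ ^ 2 + ‖A (u t)‖ ^ 2 ≤ k₄ / (1 + t) ^ 4) :
    (∀ t, 0 ≤ t → ∀ d : ℝ,
        HasDerivWithinAt (fun s => (1 + s) ^ 2 * ‖u' s‖ ^ 2) d (Set.Ici 0) t →
        d ≤ 1 / (ε * (1 + t)) *
          (-((1 + t) ^ 2 * ‖u' t‖ ^ 2) +
            2 * μ₂ * Real.sqrt k₄ * Real.sqrt ((1 + t) ^ 2 * ‖u' t‖ ^ 2))) ∧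
      ∀ t, 0 ≤ t →
        ‖u' t‖ ^ 2 ≤ max (‖u' 0‖ ^ 2) (4 * μ₂ ^ 2 * k₄) / (1 + t) ^ 2 := by
  set G : ℝ → ℝ := fun s => (1 + s) ^ 2 * ‖u' s‖ ^ 2
  have hG t (ht : 0 ≤ t) := (hu' t ht).one_add_sq_mul_norm_sq
  have hG' t (ht : 0 ≤ t) :
      2 * (1 + t) * ‖u' t‖ ^ 2 + (1 + t) ^ 2 * (2 * ⟪u' t, u'' t⟫) ≤
        1 / (ε * (1 + t)) * (-G t + 2 * μ₂ * √k₄ * √(G t)) :=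
    weighted_energy_deriv_le hε hε2 (hμ₁.le.trans (hc_lb t ht)) (hc_ub t ht) (by positivity)
      (sq_mul_le_sqrt_of_sq_le_div (by positivity)
        (by linarith [hdecay4 t ht, mul_nonneg hε.le (sq_nonneg ‖B (u' t)‖)])) (heq t ht)
  refine ⟨fun t ht d hd => ?_, fun t ht => ?_⟩
  · rw [(uniqueDiffOn_Ici 0 t ht).eq_deriv _ hd (hG t ht)]
    exact hG' t ht
  · have hGt : G t ≤ max (‖u' 0‖ ^ 2) (4 * μ₂ ^ 2 * k₄) := by
      refine image_le_of_deriv_right_nonpos_of_gt (a := 0) (b := t)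
        (fun s hs => (hG s hs.1).continuousWithinAt.mono Icc_subset_Ici_self)
        (fun s hs => (hG s hs.1).mono (Ici_subset_Ici.2 hs.1)) (by simp)
        (fun s hs hGs => ?_) ⟨ht, le_rfl⟩
      have hsq : (2 * μ₂ * √k₄) ^ 2 ≤ G s := by
        rw [mul_pow, Real.sq_sqrt hk₄.le]
        linarith [le_max_right (‖u' 0‖ ^ 2) (4 * μ₂ ^ 2 * k₄)]
      exact (hG' s hs.1).trans (mul_nonpos_of_nonneg_of_nonpos (by have := hs.1; positivity)
        (by linarith [mul_sqrt_le_of_sq_le hsq]))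
    rw [le_div_iff₀ (by positivity), mul_comm]
    exact hGt

/-- Differential inequality for `G_ε(t) = (1+t)²|u_ε'(t)|²` and the resulting decay
estimate `|u_ε'(t)|² ≤ max{G_ε(0), 4μ₂²k₄}/(1+t)²`. -/
theorem stmt_17 {H : Type*} [NormedAddCommGroup H] [InnerProductSpace ℝ H]
    (A B : H →L[ℝ] H)
    (hB_sq : ∀ x, B (B x) = A x)
    (hA_sa : ∀ x y, ⟪A x, y⟫ = ⟪x, A y⟫)
    (hB_sa : ∀ x y, ⟪B x, y⟫ = ⟪x, B y⟫)
    (m : ℝ → ℝ) (hm : ContDiff ℝ 1 m)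
    (μ₁ μ₂ k₁ k₄ ε : ℝ) (hμ₁ : 0 < μ₁) (hμ₂ : 0 < μ₂) (hk₁ : 0 < k₁) (hk₄ : 0 < k₄)
    (hε : 0 < ε) (hε2 : ε ≤ 1 / 2)
    (u u' u'' : ℝ → H)
    (hu : ∀ t, 0 ≤ t → HasDerivWithinAt u (u' t) (Set.Ici 0) t)
    (hu' : ∀ t, 0 ≤ t → HasDerivWithinAt u' (u'' t) (Set.Ici 0) t)
    (heq : ∀ t, 0 ≤ t →
      ε • u'' t + (1 / (1 + t)) • u' t + m (‖B (u t)‖ ^ 2) • A (u t) = 0)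
    (hc_lb : ∀ t, 0 ≤ t → μ₁ ≤ m (‖B (u t)‖ ^ 2))
    (hc_ub : ∀ t, 0 ≤ t → m (‖B (u t)‖ ^ 2) ≤ μ₂)
    (hdecay1 : ∀ t, 0 ≤ t → ε * ‖u' t‖ ^ 2 ≤ k₁ / (1 + t) ^ 2)
    (hdecay4 : ∀ t, 0 ≤ t →
      ε * ‖B (u' t)‖ ^ 2 + ‖A (u t)‖ ^ 2 ≤ k₄ / (1 + t) ^ 4) :
    (∀ t, 0 ≤ t → ∀ d : ℝ,
        HasDerivWithinAt (fun s => (1 + s) ^ 2 * ‖u' s‖ ^ 2) d (Set.Ici 0) t →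
        d ≤ 1 / (ε * (1 + t)) *
          (-((1 + t) ^ 2 * ‖u' t‖ ^ 2) +
            2 * μ₂ * Real.sqrt k₄ * Real.sqrt ((1 + t) ^ 2 * ‖u' t‖ ^ 2))) ∧
      ∀ t, 0 ≤ t →
        ‖u' t‖ ^ 2 ≤ max (‖u' 0‖ ^ 2) (4 * μ₂ ^ 2 * k₄) / (1 + t) ^ 2 :=
  stmt_17_general A B m μ₁ μ₂ k₄ ε hμ₁ hk₄ hε hε2 u u' u'' hu' heq hc_lb hc_ub hdecay4
end
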